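/- Let Θ : U → ℂ be smooth on an open set U ⊆ ℝ⁴ with coordinates (u,v,ζ,w), and let G[Θ] be the Plebański-type complex metric matrix. Then the inverse matrix has only the nonzero components (G⁻¹)^{uv} = (G⁻¹)^{vu} = 1, (G⁻¹)^{ζw} = (G⁻¹)^{wζ} = 1, (G⁻¹)^{uu} = 2∂_w²Θ, (G⁻¹)^{ww} = 2∂_u²Θ, (G⁻¹)^{uw} = (G⁻¹)^{wu} = −2∂_u∂_wΘ, and for every smooth φ : U → ℂ the wave operator satisfies □φ = 2(∂_u∂_vφ + ∂_w∂_ζφ + (∂_u²Θ)∂_w²φ + (∂_w²Θ)∂_u²φ − 2(∂_u∂_wΘ)∂_u∂_wφ); in particular the first-order terms Σ_{a,b}(G⁻¹)^{ab}Γ^c_{ab}∂_cφ vanish. -/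

import Mathlib

/- The inverse is checked by multiplying out. For the first-order terms write
   G^{ab} Γ^c_{ab} = G^{cd} (G^{ab} ∂_a G_{db} − ½ G^{ab} ∂_d G_{ab}).
   Only the (v,ζ)-block of G varies, and G⁻¹ vanishes on that block, so the second term is zero
   and the first reduces to ∂_u G_{dv} + ∂_w G_{dζ}, which is zero because third partial
   derivatives of Θ commute: ∂_u Θ_ww = ∂_w Θ_uw and ∂_u Θ_uw = ∂_w Θ_uu. -/

/- Background: coordinates (u,v,ζ,w) = indices (0,1,2,3) on ℝ⁴ (all real),
   Plebański-type complex metric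
   g = 2 du dv + 2 dζ dw − 2Θ_ww dv² + 4Θ_uw dv dζ − 2Θ_uu dζ². -/

noncomputable section

abbrev V4 : Type := Fin 4 → ℝ

/-- Partial derivative of a complex-valued function in coordinate direction `i`. -/
def pdC (i : Fin 4) (f : V4 → ℂ) : V4 → ℂ :=
  fun x => fderiv ℝ f x (Pi.single i 1)

/-- The Plebański-type complex metric matrix G[Θ]. -/
def pleb (Θ : V4 → ℂ) (x : V4) : Matrix (Fin 4) (Fin 4) ℂ :=
  !![0, 1, 0, 0;
     1, -2 * pdC 3 (pdC 3 Θ) x, 2 * pdC 0 (pdC 3 Θ) x, 0;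
     0, 2 * pdC 0 (pdC 3 Θ) x, -2 * pdC 0 (pdC 0 Θ) x, 1;
     0, 0, 1, 0]

/-- The inverse metric. -/
def plebInv (Θ : V4 → ℂ) (x : V4) : Matrix (Fin 4) (Fin 4) ℂ := (pleb Θ x)⁻¹

/-- Christoffel symbols Γ^c_{ab} of G[Θ]. -/
def GamP (Θ : V4 → ℂ) (c a b : Fin 4) (x : V4) : ℂ :=
  (1/2) * ∑ d, plebInv Θ x c d *
    (pdC a (fun y => pleb Θ y d b) x + pdC b (fun y => pleb Θ y d a) x
      - pdC d (fun y => pleb Θ y a b) x)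

/-- Ricci tensor of G[Θ]. -/
def ricP (Θ : V4 → ℂ) (a b : Fin 4) (x : V4) : ℂ :=
  (∑ c, pdC c (fun y => GamP Θ c a b y) x)
  - (∑ c, pdC a (fun y => GamP Θ c c b y) x)
  + ∑ c, ∑ d, (GamP Θ c c d x * GamP Θ d a b x - GamP Θ c a d x * GamP Θ d c b x)

/-- Wave operator of G[Θ]. -/
def boxP (Θ : V4 → ℂ) (φ : V4 → ℂ) (x : V4) : ℂ :=
  ∑ a, ∑ b, plebInv Θ x a b *
    (pdC a (pdC b φ) x - ∑ c, GamP Θ c a b x * pdC c φ x)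

/-- The hyper-heavenly expression
    f = Θ_uv + Θ_ζw + Θ_uu Θ_ww − Θ_uw². -/
def fTheta (Θ : V4 → ℂ) (x : V4) : ℂ :=
  pdC 0 (pdC 1 Θ) x + pdC 2 (pdC 3 Θ) x
    + pdC 0 (pdC 0 Θ) x * pdC 3 (pdC 3 Θ) x - (pdC 0 (pdC 3 Θ) x)^2

open scoped Topology

section PartialDerivatives

variable {f : V4 → ℂ} {x : V4}

@[simp]
lemma pdC_const (i : Fin 4) (c : ℂ) : pdC i (fun _ => c) x = 0 := by
  simp [pdC]

lemma pdC_const_mul (hf : DifferentiableAt ℝ f x) (i : Fin 4) (c : ℂ) :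
    pdC i (fun y => c * f y) x = c * pdC i f x := by
  simp [pdC, fderiv_const_mul hf c]

lemma Filter.EventuallyEq.pdC_eq {g : V4 → ℂ} (h : f =ᶠ[𝓝 x] g) (i : Fin 4) :
    pdC i f x = pdC i g x := by
  simp only [pdC, h.fderiv_eq]

lemma ContDiffAt.pdC {n m : WithTop ℕ∞} (hf : ContDiffAt ℝ n f x) (hmn : m + 1 ≤ n)
    (i : Fin 4) : ContDiffAt ℝ m (pdC i f) x :=
  (ContinuousLinearMap.apply ℝ ℂ (Pi.single i 1 : V4)).contDiff.contDiffAt.comp x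
    (hf.fderiv_right hmn)

lemma pdC_pdC_eq_fderiv_fderiv (hf : ContDiffAt ℝ 2 f x) (i j : Fin 4) :
    pdC i (pdC j f) x = fderiv ℝ (fderiv ℝ f) x (Pi.single i 1) (Pi.single j 1) := by
  have hdf : DifferentiableAt ℝ (fderiv ℝ f) x :=
    (hf.fderiv_right (m := 1) le_rfl).differentiableAt one_ne_zero
  change fderiv ℝ (fun y => fderiv ℝ f y (Pi.single j 1)) x (Pi.single i 1) = _
  simp [fderiv_clm_apply hdf (differentiableAt_const _)]

lemma pdC_pdC_comm (hf : ContDiffAt ℝ 2 f x) (i j : Fin 4) :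
    pdC i (pdC j f) x = pdC j (pdC i f) x := by
  rw [pdC_pdC_eq_fderiv_fderiv hf, pdC_pdC_eq_fderiv_fderiv hf]
  exact hf.isSymmSndFDerivAt (by simp) _ _

lemma pdC_pdC_eventuallyEq (hf : ContDiffAt ℝ 2 f x) (i j : Fin 4) :
    pdC i (pdC j f) =ᶠ[𝓝 x] pdC j (pdC i f) := by
  filter_upwards [hf.eventually (by simp)] with y hy using pdC_pdC_comm hy i j

end PartialDerivatives

section PlebanskiMetric

variable {Θ : V4 → ℂ} {x : V4}

lemma plebInv_eq (Θ : V4 → ℂ) (x : V4) : plebInv Θ x =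
    !![2 * pdC 3 (pdC 3 Θ) x, 1, 0, -2 * pdC 0 (pdC 3 Θ) x;
       1, 0, 0, 0;
       0, 0, 0, 1;
       -2 * pdC 0 (pdC 3 Θ) x, 0, 1, 2 * pdC 0 (pdC 0 Θ) x] := by
  refine Matrix.inv_eq_left_inv ?_
  ext i j
  fin_cases i <;> fin_cases j <;> simp [pleb, Matrix.mul_apply, Fin.sum_univ_four]

lemma pdC_pleb_apply (hΘ : ContDiffAt ℝ 3 Θ x) (k i j : Fin 4) :
    pdC k (fun y => pleb Θ y i j) x =
      !![0, 0, 0, 0;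
         0, -2 * pdC k (pdC 3 (pdC 3 Θ)) x, 2 * pdC k (pdC 0 (pdC 3 Θ)) x, 0;
         0, 2 * pdC k (pdC 0 (pdC 3 Θ)) x, -2 * pdC k (pdC 0 (pdC 0 Θ)) x, 0;
         0, 0, 0, 0] i j := by
  have hdiff (a b : Fin 4) : DifferentiableAt ℝ (pdC a (pdC b Θ)) x :=
    ((hΘ.pdC (m := 2) (by norm_num) b).pdC (m := 1) (by norm_num) a).differentiableAt
      one_ne_zero
  fin_cases i <;> fin_cases j <;> simp [pleb, -neg_mul, pdC_const_mul (hdiff _ _)]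

lemma sum_plebInv_mul_GamP (hΘ : ContDiffAt ℝ 3 Θ x) (c : Fin 4) :
    ∑ a, ∑ b, plebInv Θ x a b * GamP Θ c a b x = 0 := by
  have hΘ₂ (i : Fin 4) : ContDiffAt ℝ 2 (pdC i Θ) x := hΘ.pdC (by norm_num) i
  have hΘuww : pdC 3 (pdC 0 (pdC 3 Θ)) x = pdC 0 (pdC 3 (pdC 3 Θ)) x :=
    pdC_pdC_comm (hΘ₂ 3) 3 0
  have hΘuuw : pdC 3 (pdC 0 (pdC 0 Θ)) x = pdC 0 (pdC 0 (pdC 3 Θ)) x := by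
    rw [pdC_pdC_comm (hΘ₂ 0) 3 0, (pdC_pdC_eventuallyEq (hΘ.of_le (by norm_num)) 3 0).pdC_eq]
  simp only [GamP, plebInv_eq, pdC_pleb_apply hΘ, Fin.sum_univ_four]
  fin_cases c <;> simp [hΘuww, hΘuuw]

lemma boxP_eq_sub (Θ φ : V4 → ℂ) (x : V4) :
    boxP Θ φ x = ∑ a, ∑ b, plebInv Θ x a b * pdC a (pdC b φ) x
      - ∑ c, (∑ a, ∑ b, plebInv Θ x a b * GamP Θ c a b x) * pdC c φ x := by
  simp only [boxP, mul_sub, Finset.sum_sub_distrib, Finset.mul_sum, Finset.sum_mul, mul_assoc]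
  rw [sub_right_inj]
  exact (Finset.sum_congr rfl fun _ _ => Finset.sum_comm).trans Finset.sum_comm

lemma boxP_eq (hΘ : ContDiffAt ℝ 3 Θ x) {φ : V4 → ℂ} (hφ : ContDiffAt ℝ 2 φ x) :
    boxP Θ φ x = 2 * (pdC 0 (pdC 1 φ) x + pdC 3 (pdC 2 φ) x
        + pdC 0 (pdC 0 Θ) x * pdC 3 (pdC 3 φ) x
        + pdC 3 (pdC 3 Θ) x * pdC 0 (pdC 0 φ) x
        - 2 * pdC 0 (pdC 3 Θ) x * pdC 0 (pdC 3 φ) x) := by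
  rw [boxP_eq_sub]
  simp only [sum_plebInv_mul_GamP hΘ, zero_mul, Finset.sum_const_zero, sub_zero]
  simp only [plebInv_eq, Fin.sum_univ_four, Matrix.of_apply, Matrix.cons_val', Matrix.cons_val,
    Matrix.cons_val_zero, Matrix.cons_val_one, Matrix.cons_val_fin_one, one_mul, zero_mul, add_zero,
    zero_add, pdC_pdC_comm hφ 1 0, pdC_pdC_comm hφ 2 3, pdC_pdC_comm hφ 3 0]
  ring

end PlebanskiMetric

/-- The inverse and wave operator of the Plebański-type complex metric G[Θ];
the first-order terms of the wave operator vanish. -/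
theorem stmt5 (U : Set V4) (hUopen : IsOpen U)
    (Θ : V4 → ℂ) (hΘ : ContDiffOn ℝ (⊤ : ℕ∞) Θ U) :
    (∀ x ∈ U, plebInv Θ x =
      !![2 * pdC 3 (pdC 3 Θ) x, 1, 0, -2 * pdC 0 (pdC 3 Θ) x;
         1, 0, 0, 0;
         0, 0, 0, 1;
         -2 * pdC 0 (pdC 3 Θ) x, 0, 1, 2 * pdC 0 (pdC 0 Θ) x]) ∧
    (∀ φ : V4 → ℂ, ContDiffOn ℝ (⊤ : ℕ∞) φ U → ∀ x ∈ U,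
      boxP Θ φ x = 2 * (pdC 0 (pdC 1 φ) x + pdC 3 (pdC 2 φ) x
        + pdC 0 (pdC 0 Θ) x * pdC 3 (pdC 3 φ) x
        + pdC 3 (pdC 3 Θ) x * pdC 0 (pdC 0 φ) x
        - 2 * pdC 0 (pdC 3 Θ) x * pdC 0 (pdC 3 φ) x)) ∧
    (∀ x ∈ U, ∀ c : Fin 4, ∑ a, ∑ b, plebInv Θ x a b * GamP Θ c a b x = 0) := by
  have hsmooth {f : V4 → ℂ} (hf : ContDiffOn ℝ (⊤ : ℕ∞) f U) {x : V4} (hx : x ∈ U) (n : ℕ) :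
      ContDiffAt ℝ n f x :=
    (hf.contDiffAt (hUopen.mem_nhds hx)).of_le (WithTop.coe_le_coe.mpr le_top)
  refine ⟨fun x _ => plebInv_eq Θ x, fun φ hφ x hx => ?_, fun x hx => ?_⟩
  · exact boxP_eq (hsmooth hΘ hx 3) (hsmooth hφ hx 2)
  · exact sum_plebInv_mul_GamP (hsmooth hΘ hx 3)
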